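/- arXiv:2007.01896 — 6 statements merged into one kernel-verified Lean document; each statement's English description precedes it below -/
import Mathlib

section
/- For every real parameter b ≥ 3, every state in which exactly one cell cooperates (i.e. the states 1, 2, 4, 8, 16, 32) is mapped by t_b to the pure-defection state 0; moreover t_b(0) = 0. -/
/-- Von Neumann neighbourhoods on the 2×3 toroidal lattice.
Index `i : Fin 6` represents cell `i+1`, so `N(1)={2,3,5}` becomes `nbrs 0 = {1,2,4}`, etc. -/
def nbrs : Fin 6 → Finset (Fin 6)
  | 0 => {1, 2, 4}
  | 1 => {0, 3, 5}
  | 2 => {0, 3, 4}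
  | 3 => {1, 2, 5}
  | 4 => {0, 2, 5}
  | 5 => {1, 3, 4}

lemma nbrs_nonempty (i : Fin 6) : (nbrs i).Nonempty := by
  fin_cases i <;> simp [nbrs]

/-- Pairwise payoff to the first argument; `true` = cooperate, `false` = defect. -/
def pay (b : ℝ) : Bool → Bool → ℝ
  | false, false => 1
  | false, true  => b
  | true,  false => 0
  | true,  true  => 3

/-- Net payoff of cell `i` in state `σ`. -/
def payoff (b : ℝ) (σ : Fin 6 → Bool) (i : Fin 6) : ℝ :=
  ∑ j ∈ nbrs i, pay b (σ i) (σ j)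

/- Synchronous update map `t_b` on states: if the best payoff `m` among the
neighbours of cell `i` satisfies `m ≤ P_b(σ,i)` the cell keeps its strategy;
otherwise it cooperates iff some maximally-paid neighbour cooperates. -/
open scoped Classical in
noncomputable def update (b : ℝ) (σ : Fin 6 → Bool) : Fin 6 → Bool := fun i =>
  let m := (nbrs i).sup' (nbrs_nonempty i) fun j => payoff b σ j
  if m ≤ payoff b σ i then σ i
  else if ∃ j ∈ nbrs i, payoff b σ j = m ∧ σ j = true then true else false

/-- Decode an integer `0 ≤ n < 64` into a state: cell 1 is the most significant bit,
bit value 1 = cooperate. -/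
def dec (n : ℕ) : Fin 6 → Bool := fun i => n.testBit (5 - i.val)

/-- Encode a state as an integer via `n = Σ β(i)·2^(6−i)`. -/
def enc (σ : Fin 6 → Bool) : ℕ := ∑ i : Fin 6, if σ i then 2 ^ (5 - i.val) else 0

/-- The update map `t_b` acting on integer-coded states. -/
noncomputable def T (b : ℝ) (n : ℕ) : ℕ := enc (update b (dec n))

/-! For `b > 0` a defector earns a positive payoff from every neighbour, while a lone cooperator
earns nothing. Every cell has a defecting neighbour, so in every neighbourhood the
best payoff exceeds that of any cooperator: no cell keeps or adopts cooperation. In the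
all-defect state there is no cooperator to imitate in the first place. -/

noncomputable def bestNbrPayoff (b : ℝ) (σ : Fin 6 → Bool) (i : Fin 6) : ℝ :=
  (nbrs i).sup' (nbrs_nonempty i) fun j => payoff b σ j

lemma update_eq_false_of_forall_lt {b : ℝ} {σ : Fin 6 → Bool} {i : Fin 6}
    (h : ∀ j, σ j = true → payoff b σ j < bestNbrPayoff b σ i) : update b σ i = false := by
  change (if bestNbrPayoff b σ i ≤ payoff b σ i then σ i else _) = false
  split_ifs with hkeep hcoop
  · cases hi : σ i
    · rfl
    · exact absurd hkeep (not_le.2 (h i hi))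
  · obtain ⟨j, -, hj, hσj⟩ := hcoop
    exact absurd hj (h j hσj).ne
  · rfl

lemma payoff_pos_of_defect {b : ℝ} (hb : 0 < b) {σ : Fin 6 → Bool} {j : Fin 6}
    (hj : σ j = false) : 0 < payoff b σ j := by
  refine Finset.sum_pos (fun k _ => ?_) (nbrs_nonempty j)
  rw [hj]
  cases σ k
  · exact one_pos
  · exact hb

lemma payoff_single_self (b : ℝ) (c : Fin 6) : payoff b (fun i => decide (i = c)) c = 0 := by
  refine Finset.sum_eq_zero fun j hj => ?_
  have hjc : j ≠ c := by rintro rfl; revert hj; fin_cases j <;> decide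
  simp [hjc, pay]

lemma exists_mem_nbrs_ne (i c : Fin 6) : ∃ j ∈ nbrs i, j ≠ c := by
  revert i c; decide

lemma update_single {b : ℝ} (hb : 0 < b) (c : Fin 6) :
    update b (fun i => decide (i = c)) = fun _ => false := by
  funext i
  refine update_eq_false_of_forall_lt fun j hj => ?_
  obtain rfl : j = c := of_decide_eq_true hj
  obtain ⟨k, hk, hkc⟩ := exists_mem_nbrs_ne i j
  calc payoff b _ j = 0 := payoff_single_self b j
    _ < payoff b _ k := payoff_pos_of_defect hb (decide_eq_false hkc)
    _ ≤ bestNbrPayoff b _ i := Finset.le_sup' (fun k => payoff b _ k) hk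

lemma update_allDefect (b : ℝ) : update b (fun _ => false) = fun _ => false :=
  funext fun _ => update_eq_false_of_forall_lt fun _ h => absurd h Bool.false_ne_true

lemma enc_allDefect : enc (fun _ => false) = 0 := by
  simp [enc]

theorem stmt1 : ∀ b : ℝ, 3 ≤ b →
    (∀ n ∈ ({1, 2, 4, 8, 16, 32} : Finset ℕ), T b n = 0) ∧ T b 0 = 0 := by
  intro b hb
  have hb0 : 0 < b := by linarith
  have hsingle : ∀ n ∈ ({1, 2, 4, 8, 16, 32} : Finset ℕ),
      ∃ c : Fin 6, dec n = fun i => decide (i = c) := by decide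
  have hzero : dec 0 = fun _ => false := by decide
  refine ⟨fun n hn => ?_, ?_⟩
  · obtain ⟨c, hc⟩ := hsingle n hn
    rw [T, hc, update_single hb0, enc_allDefect]
  · rw [T, hzero, update_allDefect, enc_allDefect]
end

section
/- (Regime A absorption) For every real parameter b > 4 and every state x in which at least one cell defects (i.e. every state x ≠ 63), applying the update map twice yields pure defection: t_b(t_b(x)) = 0. -/
/-!
For `b > 4` the update rule only sees the order of the payoffs, and a cell's payoff is determined
by its strategy and its number `c ≤ 3` of cooperating neighbours: `3c` for a cooperator,
`3 + (b - 1)c` for a defector. Among these eight values the only comparison that changes for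
`b > 4` is `b + 2` against `9`, so `t_b` coincides with `t_5`, `t_7` or `t_8`, whose payoffs are
integers; for these three maps the claim is a finite computation.
-/

theorem Finset.eq_sup'_iff {ι α : Type*} [LinearOrder α] {s : Finset ι} (H : s.Nonempty)
    {f : ι → α} {j : ι} (hj : j ∈ s) : f j = s.sup' H f ↔ ∀ k ∈ s, f k ≤ f j := by
  rw [← Finset.sup'_le_iff H, le_antisymm_iff, and_iff_right (Finset.le_sup' f hj)]

section Imitation

variable {α : Type*} [LinearOrder α]

def imitate (P : Fin 6 → α) (σ : Fin 6 → Bool) (i : Fin 6) : Bool :=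
  if ∀ j ∈ nbrs i, P j ≤ P i then σ i
  else decide (∃ j ∈ nbrs i, σ j = true ∧ ∀ k ∈ nbrs i, P k ≤ P j)

theorem imitate_congr {β : Type*} [LinearOrder β] {P : Fin 6 → α} {Q : Fin 6 → β}
    (h : ∀ j k, P j ≤ P k ↔ Q j ≤ Q k) (σ : Fin 6 → Bool) : imitate P σ = imitate Q σ := by
  funext i
  simp only [imitate, h]

end Imitation

theorem update_eq_imitate (b : ℝ) (σ : Fin 6 → Bool) : update b σ = imitate (payoff b σ) σ := by
  funext i
  have hbest : (∃ j ∈ nbrs i, payoff b σ j = (nbrs i).sup' (nbrs_nonempty i) (payoff b σ) ∧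
      σ j = true) ↔ ∃ j ∈ nbrs i, σ j = true ∧ ∀ k ∈ nbrs i, payoff b σ k ≤ payoff b σ j :=
    exists_congr fun j => and_congr_right fun hj => by rw [Finset.eq_sup'_iff _ hj, and_comm]
  simp only [update, imitate, Finset.sup'_le_iff, hbest]
  rfl

def coopCount (σ : Fin 6 → Bool) (i : Fin 6) : ℕ := ((nbrs i).filter (fun j => σ j = true)).card

theorem coopCount_le_three (σ : Fin 6 → Bool) (i : Fin 6) : coopCount σ i ≤ 3 :=
  (Finset.card_filter_le _ _).trans (by fin_cases i <;> rfl)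

def payoffOfCount (b : ℝ) : Bool → ℕ → ℝ
  | true, c => 3 * c
  | false, c => 3 + (b - 1) * c

theorem payoff_eq_payoffOfCount (b : ℝ) (σ : Fin 6 → Bool) (i : Fin 6) :
    payoff b σ i = payoffOfCount b (σ i) (coopCount σ i) := by
  have hcard : (nbrs i).card = 3 := by fin_cases i <;> rfl
  have hpay : ∀ s t, pay b s t =
      (if s then 0 else 1) + (if s then 3 else b - 1) * (if t = true then 1 else 0) := by
    rintro (_ | _) (_ | _) <;> simp [pay]
  simp only [payoff, hpay, Finset.sum_add_distrib, ← Finset.mul_sum, Finset.sum_boole,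
    Finset.sum_const, hcard, nsmul_eq_mul, coopCount]
  cases σ i <;> norm_num [payoffOfCount]

theorem payoffOfCount_le_payoffOfCount_iff {b b' : ℝ} (hb : 4 < b) (hb' : 4 < b')
    (h7 : compare b 7 = compare b' 7) {s s' : Bool} {c c' : ℕ} (hc : c ≤ 3) (hc' : c' ≤ 3) :
    payoffOfCount b s c ≤ payoffOfCount b s' c' ↔ payoffOfCount b' s c ≤ payoffOfCount b' s' c' := by
  rcases lt_trichotomy b 7 with h | h | h
  · have h' : b' < 7 := compare_lt_iff_lt.mp (h7 ▸ compare_lt_iff_lt.mpr h)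
    interval_cases c <;> interval_cases c' <;> cases s <;> cases s' <;>
      simp only [payoffOfCount] <;> push_cast <;> constructor <;> intro <;> linarith
  · have h' : b' = 7 := compare_eq_iff_eq.mp (h7 ▸ compare_eq_iff_eq.mpr h)
    rw [h, h']
  · have h' : 7 < b' := compare_gt_iff_gt.mp (h7 ▸ compare_gt_iff_gt.mpr h)
    interval_cases c <;> interval_cases c' <;> cases s <;> cases s' <;>
      simp only [payoffOfCount] <;> push_cast <;> constructor <;> intro <;> linarith

theorem update_eq_update_of_compare {b b' : ℝ} (hb : 4 < b) (hb' : 4 < b')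
    (h7 : compare b 7 = compare b' 7) (σ : Fin 6 → Bool) : update b σ = update b' σ := by
  rw [update_eq_imitate, update_eq_imitate]
  refine imitate_congr (fun j k => ?_) σ
  simp only [payoff_eq_payoffOfCount]
  exact payoffOfCount_le_payoffOfCount_iff hb hb' h7 (coopCount_le_three σ j) (coopCount_le_three σ k)

def natPay (n : ℕ) : Bool → Bool → ℕ
  | false, false => 1
  | false, true  => n
  | true,  false => 0
  | true,  true  => 3

def natPayoff (n : ℕ) (σ : Fin 6 → Bool) (i : Fin 6) : ℕ :=
  ∑ j ∈ nbrs i, natPay n (σ i) (σ j)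

theorem payoff_natCast (n : ℕ) (σ : Fin 6 → Bool) (i : Fin 6) :
    payoff n σ i = natPayoff n σ i := by
  have hpay : ∀ s t, pay n s t = natPay n s t := by
    rintro (_ | _) (_ | _) <;> simp [pay, natPay]
  simp only [payoff, natPayoff, Nat.cast_sum, hpay]

theorem update_natCast (n : ℕ) (σ : Fin 6 → Bool) : update n σ = imitate (natPayoff n σ) σ := by
  rw [update_eq_imitate]
  exact imitate_congr (fun j k => by rw [payoff_natCast, payoff_natCast, Nat.cast_le]) σ

def natT (n x : ℕ) : ℕ := enc (imitate (natPayoff n (dec x)) (dec x))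

theorem natT_natT_eq_zero :
    ∀ n ∈ ({5, 7, 8} : Finset ℕ), ∀ x ∈ Finset.range 64, x ≠ 63 → natT n (natT n x) = 0 := by
  set_option maxRecDepth 2000 in decide

theorem stmt2 : ∀ b : ℝ, 4 < b → ∀ x ∈ Finset.range 64, x ≠ 63 → T b (T b x) = 0 := by
  intro b hb x hx hx63
  obtain ⟨n, hn, h7⟩ : ∃ n ∈ ({5, 7, 8} : Finset ℕ), compare b 7 = compare (n : ℝ) 7 := by
    rcases lt_trichotomy b 7 with h | h | h
    · exact ⟨5, by simp, by rw [compare_lt_iff_lt.mpr h, compare_lt_iff_lt.mpr (by norm_num)]⟩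
    · exact ⟨7, by simp, by rw [compare_eq_iff_eq.mpr h, compare_eq_iff_eq.mpr (by norm_num)]⟩
    · exact ⟨8, by simp, by rw [compare_gt_iff_gt.mpr h, compare_gt_iff_gt.mpr (by norm_num)]⟩
  have hn4 : (4 : ℝ) < n := by fin_cases hn <;> norm_num
  have hT : ∀ y, T b y = natT n y := fun y => by
    rw [T, update_eq_update_of_compare hb hn4 h7, update_natCast, natT]
  rw [hT, hT]
  exact natT_natT_eq_zero n hn x hx hx63
end

section
/- (Regime B image chain) For b = 4: the image of the set {0,1,...,62} (all states other than pure cooperation 63) under the update map t_4 equals {0, 5, 10, 17, 20, 21, 23, 29, 34, 40, 42, 43, 46, 53, 58}, and the image of that set under t_4 equals {0, 21, 23, 29, 42, 43, 46, 53, 58}. -/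
/-! For integer `b` all payoffs are integers, so `t_b` coincides with the same rule evaluated
in `ℤ`, where it is computable and both images can be checked by kernel evaluation. -/

def payInt (b : ℤ) : Bool → Bool → ℤ
  | false, false => 1
  | false, true  => b
  | true,  false => 0
  | true,  true  => 3

def payoffInt (b : ℤ) (σ : Fin 6 → Bool) (i : Fin 6) : ℤ :=
  ∑ j ∈ nbrs i, payInt b (σ i) (σ j)

def updateInt (b : ℤ) (σ : Fin 6 → Bool) : Fin 6 → Bool := fun i =>
  let m := (nbrs i).sup' (nbrs_nonempty i) fun j => payoffInt b σ j
  if m ≤ payoffInt b σ i then σ i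
  else decide (∃ j ∈ nbrs i, payoffInt b σ j = m ∧ σ j = true)

def TInt (b : ℤ) (n : ℕ) : ℕ := enc (updateInt b (dec n))

lemma pay_intCast (b : ℤ) (x y : Bool) : pay b x y = payInt b x y := by
  cases x <;> cases y <;> simp [pay, payInt]

lemma payoff_intCast (b : ℤ) (σ : Fin 6 → Bool) (i : Fin 6) :
    payoff b σ i = payoffInt b σ i := by
  simp [payoff, payoffInt, pay_intCast]

lemma update_intCast (b : ℤ) (σ : Fin 6 → Bool) : update b σ = updateInt b σ := by
  funext i
  have hsup : ((nbrs i).sup' (nbrs_nonempty i) fun j => ((payoffInt b σ j : ℤ) : ℝ))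
      = (((nbrs i).sup' (nbrs_nonempty i) fun j => payoffInt b σ j : ℤ) : ℝ) :=
    (Finset.apply_sup'_eq_sup'_comp _ _ fun _ _ => Int.cast_max).symm
  simp only [update, updateInt, payoff_intCast, hsup, Int.cast_le, Int.cast_inj]
  rfl

lemma T_intCast (b : ℤ) (n : ℕ) : T b n = TInt b n :=
  congrArg enc (update_intCast b (dec n))

theorem stmt5 :
    (Finset.range 63).image (T 4)
      = ({0, 5, 10, 17, 20, 21, 23, 29, 34, 40, 42, 43, 46, 53, 58} : Finset ℕ) ∧
    ({0, 5, 10, 17, 20, 21, 23, 29, 34, 40, 42, 43, 46, 53, 58} : Finset ℕ).image (T 4)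
      = ({0, 21, 23, 29, 42, 43, 46, 53, 58} : Finset ℕ) := by
  have hT : T 4 = TInt 4 := funext fun n => by exact_mod_cast T_intCast 4 n
  rw [hT]
  constructor <;> decide
end

section
/- (Fate of the 3-in-a-row configuration across regimes) Consider the "3-in-a-row" states 21 and 42, in which one full row of the lattice defects and the other full row cooperates. For every real b with 3 ≤ b < 4, t_b(21) = 63 and t_b(42) = 63 (they evolve to pure cooperation); for b = 4, t_4(21) = 21 and t_4(42) = 42 (they are equilibria); and for every b > 4, t_b(21) = 0 and t_b(42) = 0 (they evolve to pure defection). -/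
/-!
In the states 21 and 42 each cell has two neighbours in its own row and one in the other, so every
cooperator earns `3 + 3 + 0 = 6`, every defector earns `1 + 1 + b`, and every neighbourhood contains
both strategies. Each cell therefore adopts whichever strategy earns more: cooperation when
`b < 4`, defection when `b > 4`, and when `b = 4` no cell sees a strictly better neighbour.
-/

lemma update_apply_eq_self_of_forall_le {b : ℝ} {σ : Fin 6 → Bool} {i : Fin 6}
    (h : ∀ j ∈ nbrs i, payoff b σ j ≤ payoff b σ i) : update b σ i = σ i := by
  simp only [update]
  rw [if_pos (Finset.sup'_le _ _ h)]

lemma update_apply_eq_of_best_neighbour {b : ℝ} {σ : Fin 6 → Bool} {i j : Fin 6}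
    (hj : j ∈ nbrs i) (hlt : payoff b σ i < payoff b σ j)
    (hmax : ∀ k ∈ nbrs i, payoff b σ k ≤ payoff b σ j)
    (htie : ∀ k ∈ nbrs i, payoff b σ k = payoff b σ j → σ k = σ j) :
    update b σ i = σ j := by
  have hm : (nbrs i).sup' (nbrs_nonempty i) (fun k => payoff b σ k) = payoff b σ j :=
    le_antisymm (Finset.sup'_le _ _ hmax) (Finset.le_sup' _ hj)
  simp only [update]
  rw [hm, if_neg (not_le.2 hlt)]
  cases hσj : σ j
  · rw [if_neg]
    rintro ⟨k, hk, hkj, hkc⟩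
    simp [htie k hk hkj, hσj] at hkc
  · exact if_pos ⟨j, hj, rfl, hσj⟩

section StrategyDeterminedPayoff

variable {b : ℝ} {σ : Fin 6 → Bool} {f : Bool → ℝ}

lemma update_apply_of_payoff_eq_comp (hf : ∀ i, payoff b σ i = f (σ i))
    (hmix : ∀ i s, ∃ j ∈ nbrs i, σ j = s) (i : Fin 6) :
    update b σ i = if f (σ i) < f (!σ i) then !σ i else σ i := by
  have hle : ∀ k ∈ nbrs i, payoff b σ k ≤ max (f (σ i)) (f (!σ i)) := fun k _ => by
    rw [hf]; cases σ k <;> cases σ i <;> simp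
  split_ifs with hlt
  · obtain ⟨j, hj, hσj⟩ := hmix i (!σ i)
    rw [← hσj]
    refine update_apply_eq_of_best_neighbour hj (by simpa [hf, hσj] using hlt) ?_ ?_
    · simpa [hf j, hσj, max_eq_right hlt.le] using hle
    · intro k _ hkj
      rw [hf, hf, hσj] at hkj
      cases hσk : σ k <;> cases hσi : σ i <;> simp_all
  · exact update_apply_eq_self_of_forall_le fun k hk =>
      (hle k hk).trans_eq (by rw [hf, max_eq_left (not_lt.1 hlt)])

lemma update_eq_const_of_lt (hf : ∀ i, payoff b σ i = f (σ i))
    (hmix : ∀ i s, ∃ j ∈ nbrs i, σ j = s) {s : Bool} (hs : f (!s) < f s) :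
    update b σ = fun _ => s := by
  funext i
  rw [update_apply_of_payoff_eq_comp hf hmix]
  cases s <;> simp only [Bool.not_true, Bool.not_false] at hs <;> cases σ i <;>
    simp [hs, not_lt.2 hs.le]

lemma update_eq_self_of_eq (hf : ∀ i, payoff b σ i = f (σ i))
    (hmix : ∀ i s, ∃ j ∈ nbrs i, σ j = s) (heq : f true = f false) : update b σ = σ := by
  funext i
  rw [update_apply_of_payoff_eq_comp hf hmix]
  cases σ i <;> simp [heq]

end StrategyDeterminedPayoff

section ThreeInARow

def rowPayoff (b : ℝ) : Bool → ℝ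
  | true => 6
  | false => b + 2

lemma dec_21 : dec 21 = ![false, true, false, true, false, true] := by decide

lemma dec_42 : dec 42 = ![true, false, true, false, true, false] := by decide

variable {n : ℕ}

lemma payoff_dec_eq_rowPayoff (hn : n = 21 ∨ n = 42) (b : ℝ) (i : Fin 6) :
    payoff b (dec n) i = rowPayoff b (dec n i) := by
  rcases hn with rfl | rfl <;> fin_cases i <;>
    simp [dec_21, dec_42, payoff, nbrs, pay, rowPayoff, Finset.sum_insert] <;> ring

lemma dec_nbrs_mixed (hn : n = 21 ∨ n = 42) : ∀ i s, ∃ j ∈ nbrs i, dec n j = s := by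
  rcases hn with rfl | rfl <;> decide

lemma T_eq_of_lt_four (hn : n = 21 ∨ n = 42) {b : ℝ} (hb : b < 4) : T b n = 63 := by
  rw [T, update_eq_const_of_lt (payoff_dec_eq_rowPayoff hn b) (dec_nbrs_mixed hn)
    (s := true) (by simp [rowPayoff]; linarith)]
  decide

lemma T_four (hn : n = 21 ∨ n = 42) : T 4 n = n := by
  rw [T, update_eq_self_of_eq (payoff_dec_eq_rowPayoff hn 4) (dec_nbrs_mixed hn)
    (by norm_num [rowPayoff])]
  rcases hn with rfl | rfl <;> decide

lemma T_eq_of_four_lt (hn : n = 21 ∨ n = 42) {b : ℝ} (hb : 4 < b) : T b n = 0 := by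
  rw [T, update_eq_const_of_lt (payoff_dec_eq_rowPayoff hn b) (dec_nbrs_mixed hn)
    (s := false) (by simp [rowPayoff]; linarith)]
  decide

end ThreeInARow

theorem stmt7 :
    (∀ b : ℝ, 3 ≤ b → b < 4 → T b 21 = 63 ∧ T b 42 = 63) ∧
    (T 4 21 = 21 ∧ T 4 42 = 42) ∧
    (∀ b : ℝ, 4 < b → T b 21 = 0 ∧ T b 42 = 0) :=
  ⟨fun _ _ hb => ⟨T_eq_of_lt_four (.inl rfl) hb, T_eq_of_lt_four (.inr rfl) hb⟩,
    ⟨T_four (.inl rfl), T_four (.inr rfl)⟩,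
    fun _ hb => ⟨T_eq_of_four_lt (.inl rfl) hb, T_eq_of_four_lt (.inr rfl) hb⟩⟩
end

section
/- (A lone defector converts exactly its neighbourhood) For every real parameter b > 3 and every state x in which exactly one cell i defects and all other cells cooperate, t_b(x) is the state in which exactly cell i and its three von Neumann neighbours defect and the remaining two cells cooperate. In particular, t_b(47) = 10 for all b > 3. -/
/-!
When cell `i` alone defects, it earns `3b`, its three neighbours earn `6` and the two remaining
cells earn `9`. As `3b > 9`, each neighbour of `i` sees the defector as its unique best-paid
neighbour and defects, while `i` and the two far cells (which do not see `i`) already earn at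
least as much as every neighbour and keep their strategies.
-/

lemma nbrs_irrefl : ∀ i : Fin 6, i ∉ nbrs i := by decide

lemma mem_nbrs_comm : ∀ i j : Fin 6, j ∈ nbrs i → i ∈ nbrs j := by decide

section update

variable {b : ℝ} {σ : Fin 6 → Bool} {i : Fin 6}

lemma update_eq_self_of_payoff_le (h : ∀ j ∈ nbrs i, payoff b σ j ≤ payoff b σ i) :
    update b σ i = σ i := by
  unfold update
  exact if_pos (Finset.sup'_le _ _ h)

lemma update_eq_false_of_payoff_lt {j : Fin 6} (hj : j ∈ nbrs i)
    (hji : payoff b σ i < payoff b σ j)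
    (hjc : ∀ k ∈ nbrs i, σ k = true → payoff b σ k < payoff b σ j) :
    update b σ i = false := by
  have hm := Finset.le_sup' (fun k => payoff b σ k) hj
  unfold update
  rw [if_neg (by linarith), if_neg]
  rintro ⟨k, hk, hkm, hσk⟩
  linarith [hjc k hk hσk]

end update

def loneDefector (i : Fin 6) : Fin 6 → Bool := fun j => decide (j ≠ i)

lemma eq_loneDefector {σ : Fin 6 → Bool} {i : Fin 6} (hi : σ i = false)
    (hj : ∀ j, j ≠ i → σ j = true) : σ = loneDefector i := by
  funext j
  by_cases h : j = i
  · simp [loneDefector, h, hi]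
  · simp [loneDefector, h, hj j h]

lemma payoff_loneDefector (b : ℝ) (i k : Fin 6) :
    payoff b (loneDefector i) k = if k = i then 3 * b else if k ∈ nbrs i then 6 else 9 := by
  fin_cases i <;> fin_cases k <;> simp [payoff, loneDefector, nbrs, pay] <;> ring

lemma payoff_loneDefector_le_nine (b : ℝ) {i k : Fin 6} (hk : k ≠ i) :
    payoff b (loneDefector i) k ≤ 9 := by
  rw [payoff_loneDefector, if_neg hk]
  split_ifs <;> norm_num

lemma update_loneDefector {b : ℝ} (hb : 3 < b) (i : Fin 6) :
    update b (loneDefector i) = fun k => if k = i ∨ k ∈ nbrs i then false else true := by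
  have hpay_i : payoff b (loneDefector i) i = 3 * b := by simp [payoff_loneDefector]
  have hne_of_mem {k j : Fin 6} (hj : j ∈ nbrs k) (hk : k = i ∨ k ∉ nbrs i) : j ≠ i := by
    rintro rfl
    rcases hk with rfl | hk
    · exact nbrs_irrefl _ hj
    · exact hk (mem_nbrs_comm _ _ hj)
  funext k
  by_cases hki : k = i
  · subst hki
    rw [if_pos (Or.inl rfl), update_eq_self_of_payoff_le]
    · simp [loneDefector]
    intro j hj
    rw [hpay_i]
    linarith [payoff_loneDefector_le_nine b (hne_of_mem hj (Or.inl rfl))]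
  by_cases hkn : k ∈ nbrs i
  · rw [if_pos (Or.inr hkn)]
    refine update_eq_false_of_payoff_lt (mem_nbrs_comm _ _ hkn) ?_ fun j _ hj => ?_
    · rw [hpay_i, payoff_loneDefector, if_neg hki, if_pos hkn]
      linarith
    · have hji : j ≠ i := by simpa [loneDefector] using hj
      linarith [payoff_loneDefector_le_nine b hji]
  · rw [if_neg (by tauto), update_eq_self_of_payoff_le]
    · simp [loneDefector, hki]
    intro j hj
    rw [payoff_loneDefector b i k, if_neg hki, if_neg hkn]
    exact payoff_loneDefector_le_nine b (hne_of_mem hj (Or.inr hkn))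

theorem stmt10 : ∀ b : ℝ, 3 < b →
    (∀ σ : Fin 6 → Bool, ∀ i : Fin 6, σ i = false → (∀ j : Fin 6, j ≠ i → σ j = true) →
      update b σ = fun j => if j = i ∨ j ∈ nbrs i then false else true) ∧
    T b 47 = 10 := by
  intro b hb
  refine ⟨fun σ i hi hj => eq_loneDefector hi hj ▸ update_loneDefector hb i, ?_⟩
  have h47 : dec 47 = loneDefector 1 := by
    funext j
    fin_cases j <;> decide
  rw [T, h47, update_loneDefector hb 1]
  decide
end

section
/- (Regime D equilibria) For b = 3, the set of fixed points of the update map t_3 is exactly {0, 23, 29, 31, 43, 46, 47, 53, 55, 58, 59, 61, 62, 63}; i.e. the equilibria are pure defection, pure cooperation, the six "L-shape" states (exactly two adjacent cells in one row defect), and the six single-defector states 31, 47, 55, 59, 61, 62. -/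
/-! The update rule only compares payoffs, so it is unchanged when the real payoffs are replaced
by any order-equivalent values; at `b = 3` all payoffs are natural numbers. Over `ℕ` the update
is computable, and the fixed points are found by evaluating it on all 64 states. -/

def imitateBest {α : Type*} [LinearOrder α] (P : Fin 6 → α) (σ : Fin 6 → Bool) :
    Fin 6 → Bool := fun i =>
  let m := (nbrs i).sup' (nbrs_nonempty i) P
  if m ≤ P i then σ i
  else if ∃ j ∈ nbrs i, P j = m ∧ σ j = true then true else false

theorem update_eq_imitateBest (b : ℝ) (σ : Fin 6 → Bool) :
    update b σ = imitateBest (payoff b σ) σ := by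
  funext i
  simp only [update, imitateBest]

theorem imitateBest_comp_of_strictMono {α β : Type*} [LinearOrder α] [LinearOrder β]
    {f : α → β} (hf : StrictMono f) (P : Fin 6 → α) (σ : Fin 6 → Bool) :
    imitateBest (f ∘ P) σ = imitateBest P σ := by
  funext i
  have hsup : (nbrs i).sup' (nbrs_nonempty i) (fun j => f (P j))
      = f ((nbrs i).sup' (nbrs_nonempty i) P) :=
    (Finset.apply_sup'_eq_sup'_comp _ f fun _ _ => hf.monotone.map_max).symm
  simp only [imitateBest, Function.comp_apply, hsup, hf.le_iff_le, hf.injective.eq_iff]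

def payThree : Bool → Bool → ℕ
  | false, false => 1
  | false, true  => 3
  | true,  false => 0
  | true,  true  => 3

def payoffThree (σ : Fin 6 → Bool) (i : Fin 6) : ℕ :=
  ∑ j ∈ nbrs i, payThree (σ i) (σ j)

theorem payoff_three_eq_cast (σ : Fin 6 → Bool) :
    payoff 3 σ = Nat.cast ∘ payoffThree σ := by
  have hpay (x y : Bool) : pay 3 x y = payThree x y := by
    cases x <;> cases y <;> simp [pay, payThree]
  funext i
  simp [payoff, payoffThree, hpay]

theorem T_three_eq (n : ℕ) : T 3 n = enc (imitateBest (payoffThree (dec n)) (dec n)) := by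
  rw [T, update_eq_imitateBest, payoff_three_eq_cast,
    imitateBest_comp_of_strictMono Nat.strictMono_cast]

theorem stmt11 : (Finset.range 64).filter (fun n => T 3 n = n)
    = ({0, 23, 29, 31, 43, 46, 47, 53, 55, 58, 59, 61, 62, 63} : Finset ℕ) := by
  simp only [T_three_eq]
  decide
end
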